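/- arXiv:1504.00546 — 3 statements merged into one kernel-verified Lean document; each statement's English description precedes it below -/
import Mathlib

section
/- Let n, m, ℓ be positive integers and let x, a, b be real numbers with b < a < x. Define F_{(n,m,ℓ)}(x,a,b) = (1/((n−1)!(m−1)!(ℓ−1)!)) ∫_a^x (u−b)^{n−1} (u−a)^{m−1} (x−u)^{ℓ−1} du. Then F_{(n,m,ℓ)}(x,a,b) = Σ_{k=0}^{n−1} binom(m+k−1, k) · (1/((n−1−k)! (m+ℓ+k−1)!)) · (a−b)^{n−1−k} (x−a)^{m+ℓ+k−1}. -/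
/-!
Writing `u - b = (u - a) + (a - b)` and expanding binomially reduces the integral to Beta
integrals `∫_a^x (u - a)^p (x - u)^q du = p! q! / (p + q + 1)! · (x - a)^(p + q + 1)`, which follow by
induction on `q`: integrating by parts trades a factor `x - u` for a factor `u - a`.
-/

open Nat intervalIntegral

theorem integral_sub_pow_mul_sub_pow_succ (a x : ℝ) (p q : ℕ) :
    (p + 1) * ∫ u in a..x, (u - a) ^ p * (x - u) ^ (q + 1) =
      (q + 1) * ∫ u in a..x, (u - a) ^ (p + 1) * (x - u) ^ q := by
  have hf : ∀ t ∈ Set.uIcc a x,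
      HasDerivAt (fun t ↦ (x - t) ^ (q + 1)) (-((q + 1) * (x - t) ^ q)) t := fun t _ ↦ by
    simpa [Pi.pow_def] using ((hasDerivAt_id t).const_sub x).pow (q + 1)
  have hg : ∀ t ∈ Set.uIcc a x,
      HasDerivAt (fun t ↦ (t - a) ^ (p + 1)) ((p + 1) * (t - a) ^ p) t := fun t _ ↦ by
    simpa [Pi.pow_def] using ((hasDerivAt_id t).sub_const a).pow (p + 1)
  have parts := integral_mul_deriv_eq_deriv_mul hf hg
    (by apply Continuous.intervalIntegrable; fun_prop)
    (by apply Continuous.intervalIntegrable; fun_prop)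
  simp only [sub_self, zero_pow (succ_ne_zero _), zero_mul, mul_zero, zero_sub,
    neg_mul, integral_neg, neg_neg] at parts
  rw [← integral_const_mul, ← integral_const_mul]
  convert parts using 3 <;> ring

theorem integral_sub_pow_mul_sub_pow (a x : ℝ) (p q : ℕ) :
    ∫ u in a..x, (u - a) ^ p * (x - u) ^ q =
      p ! * q ! / (p + q + 1)! * (x - a) ^ (p + q + 1) := by
  induction q generalizing p with
  | zero =>
    simp only [pow_zero, mul_one]
    rw [integral_comp_sub_right (· ^ p), integral_pow, sub_self, zero_pow (succ_ne_zero _),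
      sub_zero, add_zero, factorial_succ, factorial_zero]
    push_cast
    field_simp
  | succ q ih =>
    have h := integral_sub_pow_mul_sub_pow_succ a x p q
    rw [ih, show p + 1 + q + 1 = p + (q + 1) + 1 by ring] at h
    apply mul_left_cancel₀ (show (p + 1 : ℝ) ≠ 0 by positivity)
    rw [h, factorial_succ p, factorial_succ q]
    push_cast
    field_simp

theorem integral_sub_pow_mul_sub_pow_mul_sub_pow (x a b : ℝ) (N M L : ℕ) :
    ∫ u in a..x, (u - b) ^ N * (u - a) ^ M * (x - u) ^ L =
      ∑ k ∈ Finset.range (N + 1), N.choose k * (a - b) ^ (N - k) *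
        ((M + k)! * L ! / (M + k + L + 1)! * (x - a) ^ (M + k + L + 1)) := by
  have expand : ∀ u, (u - b) ^ N * (u - a) ^ M * (x - u) ^ L =
      ∑ k ∈ Finset.range (N + 1),
        N.choose k * (a - b) ^ (N - k) * ((u - a) ^ (M + k) * (x - u) ^ L) := fun u ↦ by
    rw [show u - b = (u - a) + (a - b) by ring, add_pow, Finset.sum_mul, Finset.sum_mul]
    refine Finset.sum_congr rfl fun k _ ↦ ?_
    ring
  simp_rw [expand]
  rw [integral_finsetSum fun k _ ↦ by apply Continuous.intervalIntegrable; fun_prop]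
  simp_rw [integral_const_mul, integral_sub_pow_mul_sub_pow]

theorem iterated_integral_truncated_powers_succ (x a b : ℝ) (N M L : ℕ) :
    1 / (N ! * M ! * L !) * ∫ u in a..x, (u - b) ^ N * (u - a) ^ M * (x - u) ^ L =
      ∑ k ∈ Finset.range (N + 1), (M + k).choose k *
        (1 / ((N - k)! * (M + L + k + 1)!)) * (a - b) ^ (N - k) * (x - a) ^ (M + L + k + 1) := by
  rw [integral_sub_pow_mul_sub_pow_mul_sub_pow, Finset.mul_sum]
  refine Finset.sum_congr rfl fun k hk ↦ ?_
  rw [cast_choose ℝ (Finset.mem_range_succ_iff.mp hk), add_comm M k, cast_add_choose,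
    show k + M + L + 1 = M + L + k + 1 by ring]
  field_simp

theorem iterated_integral_truncated_powers_general
    (n m ℓ : ℕ) (hn : 0 < n) (hm : 0 < m) (hℓ : 0 < ℓ)
    (x a b : ℝ) :
    (1 / ((n - 1).factorial * (m - 1).factorial * (ℓ - 1).factorial) : ℝ) *
        ∫ u in a..x, (u - b) ^ (n - 1) * (u - a) ^ (m - 1) * (x - u) ^ (ℓ - 1) =
      ∑ k ∈ Finset.range n,
        ((m + k - 1).choose k : ℝ) *
          (1 / ((n - 1 - k).factorial * (m + ℓ + k - 1).factorial)) *
          (a - b) ^ (n - 1 - k) * (x - a) ^ (m + ℓ + k - 1) := by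
  obtain ⟨N, rfl⟩ := exists_eq_add_one_of_ne_zero hn.ne'
  obtain ⟨M, rfl⟩ := exists_eq_add_one_of_ne_zero hm.ne'
  obtain ⟨L, rfl⟩ := exists_eq_add_one_of_ne_zero hℓ.ne'
  have hM : ∀ k, M + 1 + k - 1 = M + k := fun k ↦ by omega
  have hML : ∀ k, M + 1 + (L + 1) + k - 1 = M + L + k + 1 := fun k ↦ by omega
  simp only [add_tsub_cancel_right, hM, hML]
  exact iterated_integral_truncated_powers_succ x a b N M L

/-- the iterated-integral lemma for products of truncated powers. -/
theorem iterated_integral_truncated_powers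
    (n m ℓ : ℕ) (hn : 0 < n) (hm : 0 < m) (hℓ : 0 < ℓ)
    (x a b : ℝ) (hba : b < a) (hax : a < x) :
    (1 / ((n - 1).factorial * (m - 1).factorial * (ℓ - 1).factorial) : ℝ) *
        ∫ u in a..x, (u - b) ^ (n - 1) * (u - a) ^ (m - 1) * (x - u) ^ (ℓ - 1) =
      ∑ k ∈ Finset.range n,
        ((m + k - 1).choose k : ℝ) *
          (1 / ((n - 1 - k).factorial * (m + ℓ + k - 1).factorial)) *
          (a - b) ^ (n - 1 - k) * (x - a) ^ (m + ℓ + k - 1) :=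
  iterated_integral_truncated_powers_general n m ℓ hn hm hℓ x a b
end

section
/- Let x¹,…,xˢ be linearly independent vectors in ℝˢ with dual basis x̃¹,…,x̃ˢ and M = [x¹ ⋯ xˢ]. For α ∈ ℝ₊ˢ define C_α(x | X) = |det M|⁻¹ Π_{k=1}^{s} ⟨x, x̃ᵏ⟩₊^{α_k−1}/Γ(α_k). Suppose α_k > 1 for every k (so that α − eᵏ ∈ ℝ₊ˢ for each canonical basis vector eᵏ of ℝˢ) and |α| := α₁+⋯+αₛ ≠ s. Then for every x ∈ ℝˢ, C_α(x | X) = (1/(|α|−s)) Σ_{k=1}^{s} ⟨x, x̃ᵏ⟩ C_{α−eᵏ}(x | X). -/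
/-- Truncated real power: `t₊^β = t^β` for `t > 0` and `0` for `t ≤ 0`. -/
noncomputable def truncRPow (t β : ℝ) : ℝ := if 0 < t then t ^ β else 0

/-- The fractional cone spline `C_α(x | X)` for `s` linearly independent knots
`x¹,…,xˢ ⊂ ℝˢ` with dual basis `x̃¹,…,x̃ˢ`:
`C_α(x|X) = |det M|⁻¹ Π_k ⟨x, x̃ᵏ⟩₊^{α_k−1}/Γ(α_k)`. -/
noncomputable def fracConeSpline (s : ℕ) (x xt : Fin s → Fin s → ℝ)
    (α : Fin s → ℝ) (p : Fin s → ℝ) : ℝ :=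
  |(Matrix.of fun i j => x j i).det|⁻¹ *
    ∏ k, truncRPow (∑ i, p i * xt k i) (α k - 1) / Real.Gamma (α k)

/-!
Multiplying the `k`-th factor of `C_{α-eᵏ}` by `⟨x, x̃ᵏ⟩` raises its exponent by one, and
`Γ(α_k) = (α_k - 1) Γ(α_k - 1)` then turns the `k`-th summand into `(α_k - 1) C_α(x | X)`.
Summing over `k` gives `(|α| - s) C_α(x | X)`.
-/

open Finset

lemma mul_truncRPow_sub_one (t β : ℝ) : t * truncRPow t (β - 1) = truncRPow t β := by
  unfold truncRPow
  split_ifs with ht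
  · rw [mul_comm, ← Real.rpow_add_one ht.ne', sub_add_cancel]
  · rw [mul_zero]

-- At the poles of `Γ` both sides are `0`, since `x / 0 = 0`.
lemma mul_truncRPow_div_Gamma_sub_one (t : ℝ) {a : ℝ} (ha : a ≠ 1) :
    t * (truncRPow t (a - 1 - 1) / Real.Gamma (a - 1)) =
      (a - 1) * (truncRPow t (a - 1) / Real.Gamma a) := by
  have hGamma : Real.Gamma a = (a - 1) * Real.Gamma (a - 1) := by
    simpa using Real.Gamma_add_one (sub_ne_zero.mpr ha)
  rw [← mul_div_assoc, mul_truncRPow_sub_one, hGamma, ← mul_div_assoc,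
    mul_div_mul_left _ _ (sub_ne_zero.mpr ha)]

lemma dualCoord_mul_fracConeSpline_sub_single (s : ℕ) (x xt : Fin s → Fin s → ℝ)
    (α : Fin s → ℝ) (p : Fin s → ℝ) {k : Fin s} (hk : α k ≠ 1) :
    (∑ i, p i * xt k i) * fracConeSpline s x xt (fun j => α j - if j = k then 1 else 0) p =
      (α k - 1) * fracConeSpline s x xt α p := by
  have hrest : ∏ j ∈ {k}ᶜ, truncRPow (∑ i, p i * xt j i) ((α j - if j = k then 1 else 0) - 1) /
        Real.Gamma (α j - if j = k then 1 else 0) =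
      ∏ j ∈ {k}ᶜ, truncRPow (∑ i, p i * xt j i) (α j - 1) / Real.Gamma (α j) :=
    prod_congr rfl fun j hj => by rw [if_neg (mem_compl.mp hj ∘ mem_singleton.mpr), sub_zero]
  unfold fracConeSpline
  rw [Fintype.prod_eq_mul_prod_compl k, Fintype.prod_eq_mul_prod_compl k, hrest]
  simp only [if_true]
  linear_combination (|(Matrix.of fun i j => x j i).det|⁻¹ *
      ∏ j ∈ {k}ᶜ, truncRPow (∑ i, p i * xt j i) (α j - 1) / Real.Gamma (α j)) *
    mul_truncRPow_div_Gamma_sub_one (∑ i, p i * xt k i) hk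

theorem fracConeSpline_recurrence_general
    (s : ℕ) (x xt : Fin s → Fin s → ℝ)
    (α : Fin s → ℝ) (hα : ∀ k, 1 < α k) (hαs : (∑ k, α k) ≠ s) :
    ∀ p : Fin s → ℝ,
      fracConeSpline s x xt α p =
        (1 / ((∑ k, α k) - s)) *
          ∑ k, (∑ i, p i * xt k i) *
            fracConeSpline s x xt (fun j => α j - if j = k then 1 else 0) p := by
  intro p
  have hsum : ∑ k, (∑ i, p i * xt k i) *
      fracConeSpline s x xt (fun j => α j - if j = k then 1 else 0) p =
        ((∑ k, α k) - s) * fracConeSpline s x xt α p := by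
    simp only [fun k => dualCoord_mul_fracConeSpline_sub_single s x xt α p (hα k).ne',
      ← sum_mul, sum_sub_distrib, sum_const, card_univ, Fintype.card_fin, nsmul_one]
  rw [hsum, ← mul_assoc, one_div_mul_cancel (sub_ne_zero.mpr hαs), one_mul]

/-- recurrence relation for fractional cone splines:
`C_α(x|X) = (|α|−s)⁻¹ Σ_k ⟨x, x̃ᵏ⟩ C_{α−eᵏ}(x|X)` whenever each `α_k > 1`
and `|α| ≠ s`. -/
theorem fracConeSpline_recurrence
    (s : ℕ) (hs : 0 < s) (x xt : Fin s → Fin s → ℝ)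
    (hindep : LinearIndependent ℝ x)
    (hdual : ∀ j k, (∑ i, x j i * xt k i) = if j = k then (1 : ℝ) else 0)
    (α : Fin s → ℝ) (hα : ∀ k, 1 < α k) (hαs : (∑ k, α k) ≠ s) :
    ∀ p : Fin s → ℝ,
      fracConeSpline s x xt α p =
        (1 / ((∑ k, α k) - s)) *
          ∑ k, (∑ i, p i * xt k i) *
            fracConeSpline s x xt (fun j => α j - if j = k then 1 else 0) p :=
  fracConeSpline_recurrence_general s x xt α hα hαs
end

section
/- Let X = {x¹, x², x³} ⊂ ℝ² be a 3-directional mesh with x³ = x¹ + x² = (1,0)ᵀ and let α ∈ ℝ₊³ with |α| = α₁+α₂+α₃. Let B̂_α(ω | X⁻) = ( (1−e^{−i⟨ω,x¹⟩})/(i⟨ω,x¹⟩) )^{α₁} ( (1−e^{−i⟨ω,x²⟩})/(i⟨ω,x²⟩) )^{α₂} ( (e^{i⟨ω,x³⟩}−1)/(i⟨ω,x³⟩) )^{α₃} denote the Fourier transform of the fractional hex spline. Then for almost every ω ∈ ℝ², 2 B̂_α(2ω | X⁻) = 2^{1−|α|} (1 + e^{−i⟨ω,x¹⟩})^{α₁}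 (1 + e^{−i⟨ω,x²⟩})^{α₂} (1 + e^{i⟨ω,x³⟩})^{α₃} · B̂_α(ω | X⁻); that is, the refinement filter H_α(ω) := 2 B̂_α(2ω|X⁻)/B̂_α(ω|X⁻) equals 2^{1−|α|}(1+e^{−i⟨ω,x¹⟩})^{α₁}(1+e^{−i⟨ω,x²⟩})^{α₂}(1+e^{i⟨ω,x³⟩})^{α₃} almost everywhere. -/
/-!
Each factor `φ` of `B̂_α` satisfies the two-scale relation `φ(2u) = φ(u) · (1 + e^{∓iu})/2`.
Both `φ(u) = sinc(u/2) e^{∓iu/2}` and `(1 + e^{∓iu})/2 = cos(u/2) e^{∓iu/2}` are real multiples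
of the same unimodular number, and the second has real part `cos²(u/2) ≥ 0`; hence the arguments of
the two factors add up to a value in `(-π, π]` (or one factor vanishes), so the principal power
`(φ(u) · (1 + e^{∓iu})/2)^α` splits into the product of the powers.
-/

open MeasureTheory

/-- `(1 − e^{−iu})/(iu)`, continuously extended by `1` at `u = 0`. -/
noncomputable def phiM (u : ℝ) : ℂ :=
  if u = 0 then 1 else (1 - Complex.exp (-Complex.I * u)) / (Complex.I * u)

/-- `(e^{iu} − 1)/(iu)`, continuously extended by `1` at `u = 0`. -/
noncomputable def phiP (u : ℝ) : ℂ :=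
  if u = 0 then 1 else (Complex.exp (Complex.I * u) - 1) / (Complex.I * u)

/-- The Fourier transform `B̂_α(ω | X⁻)` of the fractional hex spline of order
`α = (α₁,α₂,α₃)` on the 3-directional mesh `X = {x¹, x², x¹+x²}`, with principal
branch powers. -/
noncomputable def fracHexFT (x1 x2 : Fin 2 → ℝ) (α₁ α₂ α₃ : ℝ) (ω : Fin 2 → ℝ) : ℂ :=
  phiM (∑ i, ω i * x1 i) ^ (α₁ : ℂ) * phiM (∑ i, ω i * x2 i) ^ (α₂ : ℂ) *
    phiP (∑ i, ω i * (x1 i + x2 i)) ^ (α₃ : ℂ)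

open Complex Set
open scoped Real

namespace Complex

lemma mul_cpow_of_arg_add_arg_mem {z w : ℂ} (hz : z ≠ 0) (hw : w ≠ 0)
    (h : arg z + arg w ∈ Ioc (-π) π) (α : ℂ) : (z * w) ^ α = z ^ α * w ^ α := by
  rw [cpow_def_of_ne_zero (mul_ne_zero hz hw), log_mul hz hw h, add_mul, exp_add,
    ← cpow_def_of_ne_zero hz, ← cpow_def_of_ne_zero hw]

lemma arg_ofReal_mul_add_arg_mem_Ioc {w : ℂ} (hw : 0 < w.re) {μ : ℝ} (hμ : μ ≠ 0) :
    arg (μ * w) + arg w ∈ Ioc (-π) π := by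
  have hw' := abs_lt.mp (abs_arg_lt_pi_div_two_iff.mpr (Or.inl hw))
  rcases hμ.lt_or_gt with hμ | hμ
  · rw [show (μ : ℂ) * w = ((-μ : ℝ) : ℂ) * -w by push_cast; ring,
      arg_real_mul _ (neg_pos.mpr hμ)]
    have hneg : arg (-w) = arg w + π ∨ arg (-w) = arg w - π := by
      rcases le_or_gt w.im 0 with him | him
      · exact .inl (arg_neg_eq_arg_add_pi_iff.mpr (him.lt_or_eq.imp_right fun h => ⟨h, hw⟩))
      · exact .inr (arg_neg_eq_arg_sub_pi_of_im_pos him)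
    have := neg_pi_lt_arg (-w)
    have := arg_le_pi (-w)
    constructor <;> rcases hneg with h | h <;> linarith
  · rw [arg_real_mul _ hμ]
    constructor <;> linarith

lemma ofReal_mul_mul_cpow {w : ℂ} (hw : 0 < w.re) (μ : ℝ) (α : ℂ) :
    (μ * w * w) ^ α = (μ * w) ^ α * w ^ α := by
  have hw0 : w ≠ 0 := fun h => by simp [h] at hw
  rcases eq_or_ne μ 0 with rfl | hμ
  · by_cases hα : α = 0 <;> simp [hα]
  exact mul_cpow_of_arg_add_arg_mem (mul_ne_zero (ofReal_ne_zero.mpr hμ) hw0) hw0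
    (arg_ofReal_mul_add_arg_mem_Ioc hw hμ) α

lemma div_two_cpow (z α : ℂ) : (z / 2) ^ α = z ^ α / 2 ^ α := by
  rcases eq_or_ne z 0 with rfl | hz
  · by_cases hα : α = 0 <;> simp [hα]
  have harg_inv : arg (2⁻¹ : ℂ) = 0 := by simp [arg_inv, Real.pi_ne_zero.symm]
  rw [div_eq_mul_inv, mul_cpow_of_arg_add_arg_mem hz (by norm_num)
      (by simp [harg_inv, neg_pi_lt_arg, arg_le_pi]),
    inv_cpow _ _ (by simp [Real.pi_ne_zero.symm]), div_eq_mul_inv]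

lemma two_cpow_one_sub (a b c : ℝ) :
    (2 : ℂ) ^ ((1 - (a + b + c) : ℝ) : ℂ) = 2 / (2 ^ (a : ℂ) * 2 ^ (b : ℂ) * 2 ^ (c : ℂ)) := by
  push_cast
  rw [cpow_sub _ _ two_ne_zero, cpow_one, cpow_add _ _ two_ne_zero, cpow_add _ _ two_ne_zero]

end Complex

lemma phiM_two_mul (u : ℝ) : phiM (2 * u) = phiM u * ((1 + exp (-I * u)) / 2) := by
  rcases eq_or_ne u 0 with rfl | hu
  · simp [phiM]
  have hu' : (u : ℂ) ≠ 0 := ofReal_ne_zero.mpr hu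
  have hexp : exp (-I * ↑(2 * u)) = exp (-I * u) ^ 2 := by
    rw [← exp_nat_mul]; congr 1; push_cast; ring
  rw [phiM, phiM, if_neg (mul_ne_zero two_ne_zero hu), if_neg hu, hexp]
  push_cast
  field_simp
  ring

lemma exp_neg_I_mul_eq_sq (u : ℝ) : exp (-I * u) = exp (-((u : ℂ) / 2) * I) ^ 2 := by
  rw [← exp_nat_mul]; congr 1; push_cast; ring

lemma phiM_eq_sinc_mul_exp (u : ℝ) :
    phiM u = Real.sinc (u / 2) * exp (↑(-(u / 2)) * I) := by
  rcases eq_or_ne u 0 with rfl | hu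
  · simp [phiM]
  have hu' : (u : ℂ) ≠ 0 := ofReal_ne_zero.mpr hu
  have h2sin := two_sin ((u : ℂ) / 2)
  have hinv : exp ((u : ℂ) / 2 * I) * exp (-((u : ℂ) / 2) * I) = 1 := by
    rw [← exp_add]; simp
  rw [phiM, if_neg hu, Real.sinc_of_ne_zero (by positivity), exp_neg_I_mul_eq_sq]
  push_cast
  generalize exp (-((u : ℂ) / 2) * I) = ζ at *
  generalize exp ((u : ℂ) / 2 * I) = η at *
  field_simp
  linear_combination (-I * ζ) * h2sin - hinv + (ζ * η - ζ ^ 2) * I_sq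

lemma one_add_exp_neg_div_two (u : ℝ) :
    (1 + exp (-I * u)) / 2 = Real.cos (u / 2) * exp (↑(-(u / 2)) * I) := by
  have h2cos := two_cos ((u : ℂ) / 2)
  have hinv : exp ((u : ℂ) / 2 * I) * exp (-((u : ℂ) / 2) * I) = 1 := by
    rw [← exp_add]; simp
  rw [exp_neg_I_mul_eq_sq]
  push_cast
  generalize exp (-((u : ℂ) / 2) * I) = ζ at *
  generalize exp ((u : ℂ) / 2 * I) = η at *
  linear_combination (-ζ / 2) * h2cos - hinv / 2

lemma phiM_two_mul_cpow (u : ℝ) (α : ℂ) :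
    phiM (2 * u) ^ α = (1 + exp (-I * u)) ^ α / 2 ^ α * phiM u ^ α := by
  rw [phiM_two_mul, ← div_two_cpow, mul_comm _ (phiM u ^ α)]
  rcases eq_or_ne (Real.cos (u / 2)) 0 with hc | hc
  · rw [one_add_exp_neg_div_two, hc, ofReal_zero, zero_mul, mul_zero]
    by_cases hα : α = 0 <;> simp [hα]
  have hre : 0 < ((1 + exp (-I * u)) / 2).re := by
    rw [one_add_exp_neg_div_two, re_ofReal_mul, exp_ofReal_mul_I_re, Real.cos_neg]
    exact mul_self_pos.mpr hc
  have hreal : phiM u = ↑(Real.sinc (u / 2) / Real.cos (u / 2)) * ((1 + exp (-I * u)) / 2) := by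
    rw [phiM_eq_sinc_mul_exp, one_add_exp_neg_div_two, ← mul_assoc, ← ofReal_mul,
      div_mul_cancel₀ _ hc]
  rw [hreal, ofReal_mul_mul_cpow hre]

lemma phiP_eq_phiM_neg (u : ℝ) : phiP u = phiM (-u) := by
  rcases eq_or_ne u 0 with rfl | hu
  · simp [phiM, phiP]
  have hu' : (u : ℂ) ≠ 0 := ofReal_ne_zero.mpr hu
  rw [phiP, phiM, if_neg hu, if_neg (neg_ne_zero.mpr hu)]
  push_cast
  field_simp
  ring_nf

lemma phiP_two_mul_cpow (u : ℝ) (α : ℂ) :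
    phiP (2 * u) ^ α = (1 + exp (I * u)) ^ α / 2 ^ α * phiP u ^ α := by
  simpa [phiP_eq_phiM_neg] using phiM_two_mul_cpow (-u) α

theorem fracHex_refinement_filter_general
    (x1 x2 : Fin 2 → ℝ)
    (α₁ α₂ α₃ : ℝ) :
    ∀ᵐ ω : Fin 2 → ℝ ∂volume,
      2 * fracHexFT x1 x2 α₁ α₂ α₃ (fun i => 2 * ω i) =
        (2 : ℂ) ^ (((1 - (α₁ + α₂ + α₃) : ℝ) : ℂ)) *
          (1 + Complex.exp (-Complex.I * ((∑ i, ω i * x1 i : ℝ) : ℂ))) ^ (α₁ : ℂ) *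
          (1 + Complex.exp (-Complex.I * ((∑ i, ω i * x2 i : ℝ) : ℂ))) ^ (α₂ : ℂ) *
          (1 + Complex.exp (Complex.I * ((∑ i, ω i * (x1 i + x2 i) : ℝ) : ℂ))) ^ (α₃ : ℂ) *
          fracHexFT x1 x2 α₁ α₂ α₃ ω := by
  refine Filter.Eventually.of_forall fun ω => ?_
  have hscale (v : Fin 2 → ℝ) : ∑ i, 2 * ω i * v i = 2 * ∑ i, ω i * v i := by
    simp only [Finset.mul_sum, mul_assoc]
  simp only [fracHexFT, hscale, phiM_two_mul_cpow, phiP_two_mul_cpow, two_cpow_one_sub]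
  ring

/-- the two-scale (refinement) relation in the Fourier domain:
`2 B̂_α(2ω) = 2^{1−|α|}(1+e^{−i⟨ω,x¹⟩})^{α₁}(1+e^{−i⟨ω,x²⟩})^{α₂}(1+e^{i⟨ω,x³⟩})^{α₃} B̂_α(ω)`
for almost every `ω ∈ ℝ²`. -/
theorem fracHex_refinement_filter
    (x1 x2 : Fin 2 → ℝ) (hindep : LinearIndependent ℝ ![x1, x2])
    (hsum : x1 + x2 = ![1, 0])
    (α₁ α₂ α₃ : ℝ) (hα1 : 0 < α₁) (hα2 : 0 < α₂) (hα3 : 0 < α₃) :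
    ∀ᵐ ω : Fin 2 → ℝ ∂volume,
      2 * fracHexFT x1 x2 α₁ α₂ α₃ (fun i => 2 * ω i) =
        (2 : ℂ) ^ (((1 - (α₁ + α₂ + α₃) : ℝ) : ℂ)) *
          (1 + Complex.exp (-Complex.I * ((∑ i, ω i * x1 i : ℝ) : ℂ))) ^ (α₁ : ℂ) *
          (1 + Complex.exp (-Complex.I * ((∑ i, ω i * x2 i : ℝ) : ℂ))) ^ (α₂ : ℂ) *
          (1 + Complex.exp (Complex.I * ((∑ i, ω i * (x1 i + x2 i) : ℝ) : ℂ))) ^ (α₃ : ℂ) *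
          fracHexFT x1 x2 α₁ α₂ α₃ ω :=
  fracHex_refinement_filter_general x1 x2 α₁ α₂ α₃
end
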